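/- arXiv:1909.11600 — 2 statements merged into one kernel-verified Lean document; each statement's English description precedes it below -/
import Mathlib

section
/- Let (𝓢, 𝓔) be a set system with positive set costs c_s in which every element belongs to at most f sets of 𝓢, and let ε > 0. Let w be a fractional packing on (𝓢, 𝓔) (nonnegative weights with ∑_{e∈s} w(e) ≥ 0 and ∑_{e∈s} w(e) ≤ c_s for all s ∈ 𝓢), and let 𝓘 ⊆ 𝓢 be a set cover of 𝓔 with ∑_{e∈s} w(e) ≥ c_s for every s ∈ 𝓘. Let D ⊆ 𝓔 and 𝓔' = 𝓔 \ D, and suppose that for every real x ≥ 0, |{e ∈ D : w(e) > x}| ≤ ε·|{e ∈ 𝓔' : w(e) > x}|. Then ∑_{e∈D} w(e) ≤ ε·∑_{e∈𝓔'} w(e), and consequently c(𝓘) ≤ (1+ε) f · c(𝓙) for every set cover 𝓙 ⊆ 𝓢 of 𝓔'. -/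
/-!
By the layer-cake formula `∑_{e ∈ S} w e = ∫_0^∞ |S_{>x}| dx` for nonnegative weights, the
level-set hypothesis integrates to `w(D) ≤ ε·w(𝓔')`, so `w(𝓔) ≤ (1+ε)·w(𝓔')`. Tightness of the
sets of `𝓘` and double counting give `c(𝓘) ≤ f·w(𝓔)`, while any cover `𝓙` of `𝓔'` pays at least
`w(𝓔')` because `w` is a packing.
-/

open Finset MeasureTheory

section LayerCake

variable {α : Type*} (w : α → ℝ) (S : Finset α)

lemma card_filter_lt_eq_sum_indicator (x : ℝ) :
    (#{e ∈ S | x < w e} : ℝ) = ∑ e ∈ S, (Set.Iio (w e)).indicator 1 x := by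
  rw [card_filter, Nat.cast_sum]
  refine sum_congr rfl fun e _ => ?_
  by_cases h : x < w e <;> simp [h]

lemma integrableOn_indicator_Iio_one (a : ℝ) :
    IntegrableOn ((Set.Iio a).indicator (1 : ℝ → ℝ)) (Set.Ioi 0) := by
  rw [IntegrableOn, integrable_indicator_iff measurableSet_Iio, IntegrableOn,
    Measure.restrict_restrict measurableSet_Iio, Set.Iio_inter_Ioi]
  exact integrableOn_const measure_Ioo_lt_top.ne

lemma setIntegral_Ioi_indicator_Iio_one {a : ℝ} (ha : 0 ≤ a) :
    ∫ x in Set.Ioi 0, (Set.Iio a).indicator 1 x = a := by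
  rw [setIntegral_indicator measurableSet_Iio, Set.Ioi_inter_Iio]
  simp [ha]

lemma integrableOn_card_filter_lt :
    IntegrableOn (fun x => (#{e ∈ S | x < w e} : ℝ)) (Set.Ioi 0) := by
  simp_rw [card_filter_lt_eq_sum_indicator]
  exact integrable_finsetSum _ fun e _ => integrableOn_indicator_Iio_one (w e)

lemma sum_eq_integral_card_filter_lt (hw : ∀ e ∈ S, 0 ≤ w e) :
    ∑ e ∈ S, w e = ∫ x in Set.Ioi 0, (#{e ∈ S | x < w e} : ℝ) := by
  simp_rw [card_filter_lt_eq_sum_indicator,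
    integral_finsetSum _ fun e _ => integrableOn_indicator_Iio_one (w e)]
  exact sum_congr rfl fun e he => (setIntegral_Ioi_indicator_Iio_one (hw e he)).symm

lemma sum_le_mul_sum_of_card_filter_lt_le {S T : Finset α} {ε : ℝ}
    (hS : ∀ e ∈ S, 0 ≤ w e) (hT : ∀ e ∈ T, 0 ≤ w e)
    (hlevel : ∀ x, 0 < x → (#{e ∈ S | x < w e} : ℝ) ≤ ε * #{e ∈ T | x < w e}) :
    ∑ e ∈ S, w e ≤ ε * ∑ e ∈ T, w e := by
  rw [sum_eq_integral_card_filter_lt w S hS, sum_eq_integral_card_filter_lt w T hT,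
    ← integral_const_mul]
  exact setIntegral_mono_on (integrableOn_card_filter_lt w S)
    ((integrableOn_card_filter_lt w T).const_mul ε) measurableSet_Ioi hlevel

end LayerCake

section DoubleCounting

variable {α : Type*} [DecidableEq α] {w : α → ℝ} {E : Finset α} {B : Finset (Finset α)}

lemma sum_sum_eq_sum_card_filter_mem_mul (hB : ∀ s ∈ B, s ⊆ E) :
    ∑ s ∈ B, ∑ e ∈ s, w e = ∑ e ∈ E, (#{s ∈ B | e ∈ s} : ℝ) * w e := by
  have hrestrict : ∀ s ∈ B, ∑ e ∈ s, w e = ∑ e ∈ E, if e ∈ s then w e else 0 := fun s hs => by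
    rw [sum_ite_mem, inter_eq_right.2 (hB s hs)]
  rw [sum_congr rfl hrestrict, sum_comm]
  refine sum_congr rfl fun e _ => ?_
  rw [← sum_filter, sum_const, nsmul_eq_mul]

lemma sum_sum_le_mul_sum_of_card_filter_mem_le {n : ℕ} (hw : ∀ e ∈ E, 0 ≤ w e)
    (hB : ∀ s ∈ B, s ⊆ E) (hfreq : ∀ e ∈ E, #{s ∈ B | e ∈ s} ≤ n) :
    ∑ s ∈ B, ∑ e ∈ s, w e ≤ n * ∑ e ∈ E, w e := by
  rw [sum_sum_eq_sum_card_filter_mem_mul hB, mul_sum]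
  exact sum_le_sum fun e he => mul_le_mul_of_nonneg_right (by exact_mod_cast hfreq e he) (hw e he)

lemma sum_le_sum_sum_of_cover {T : Finset α} (hw : ∀ e ∈ E, 0 ≤ w e) (hT : T ⊆ E)
    (hB : ∀ s ∈ B, s ⊆ E) (hcover : ∀ e ∈ T, ∃ s ∈ B, e ∈ s) :
    ∑ e ∈ T, w e ≤ ∑ s ∈ B, ∑ e ∈ s, w e := by
  rw [sum_sum_eq_sum_card_filter_mem_mul hB]
  calc ∑ e ∈ T, w e ≤ ∑ e ∈ T, (#{s ∈ B | e ∈ s} : ℝ) * w e := by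
        refine sum_le_sum fun e he => le_mul_of_one_le_left (hw e (hT he)) ?_
        obtain ⟨s, hs, hes⟩ := hcover e he
        exact_mod_cast card_pos.2 ⟨s, mem_filter.2 ⟨hs, hes⟩⟩
    _ ≤ ∑ e ∈ E, (#{s ∈ B | e ∈ s} : ℝ) * w e :=
        sum_le_sum_of_subset_of_nonneg hT fun e he _ => mul_nonneg (Nat.cast_nonneg _) (hw e he)

end DoubleCounting

theorem batch_deletion_general_weights_general {α : Type*} [DecidableEq α]
    (𝓢 : Finset (Finset α)) (𝓔 : Finset α) (c : Finset α → ℝ)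
    (hsub : ∀ s ∈ 𝓢, s ⊆ 𝓔)
    (f : ℕ)
    (hf : ∀ e ∈ 𝓔, (𝓢.filter (fun s => e ∈ s)).card ≤ f)
    (ε : ℝ) (hε : 0 < ε)
    (w : α → ℝ) (hw : ∀ e ∈ 𝓔, 0 ≤ w e)
    (hpack : ∀ s ∈ 𝓢, ∑ e ∈ s, w e ≤ c s)
    (𝓘 : Finset (Finset α)) (h𝓘 : 𝓘 ⊆ 𝓢)
    (htight : ∀ s ∈ 𝓘, c s ≤ ∑ e ∈ s, w e)
    (D : Finset α) (hD : D ⊆ 𝓔)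
    (hlevel : ∀ x : ℝ, 0 ≤ x →
      ((D.filter (fun e => x < w e)).card : ℝ) ≤
        ε * (((𝓔 \ D).filter (fun e => x < w e)).card : ℝ)) :
    (∑ e ∈ D, w e ≤ ε * ∑ e ∈ 𝓔 \ D, w e) ∧
      (∀ 𝓙 : Finset (Finset α), 𝓙 ⊆ 𝓢 → (∀ e ∈ 𝓔 \ D, ∃ s ∈ 𝓙, e ∈ s) →
        ∑ s ∈ 𝓘, c s ≤ (1 + ε) * f * ∑ s ∈ 𝓙, c s) := by
  have hdeleted : ∑ e ∈ D, w e ≤ ε * ∑ e ∈ 𝓔 \ D, w e :=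
    sum_le_mul_sum_of_card_filter_lt_le w (fun e he => hw e (hD he))
      (fun e he => hw e (sdiff_subset he)) fun x hx => hlevel x hx.le
  refine ⟨hdeleted, fun 𝓙 h𝓙 hcover => ?_⟩
  have htotal : ∑ e ∈ 𝓔, w e ≤ (1 + ε) * ∑ e ∈ 𝓔 \ D, w e := by
    linarith [sum_sdiff hD (f := w)]
  have h𝓘freq : ∀ e ∈ 𝓔, #{s ∈ 𝓘 | e ∈ s} ≤ f := fun e he =>
    (card_le_card (filter_subset_filter _ h𝓘)).trans (hf e he)
  have h𝓙cost : ∑ e ∈ 𝓔 \ D, w e ≤ ∑ s ∈ 𝓙, c s :=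
    (sum_le_sum_sum_of_cover hw sdiff_subset (fun s hs => hsub s (h𝓙 hs)) hcover).trans
      (sum_le_sum fun s hs => hpack s (h𝓙 hs))
  calc ∑ s ∈ 𝓘, c s ≤ ∑ s ∈ 𝓘, ∑ e ∈ s, w e := sum_le_sum htight
    _ ≤ f * ∑ e ∈ 𝓔, w e :=
        sum_sum_le_mul_sum_of_card_filter_mem_le hw (fun s hs => hsub s (h𝓘 hs)) h𝓘freq
    _ ≤ f * ((1 + ε) * ∑ s ∈ 𝓙, c s) := by gcongr; exact htotal.trans (by gcongr)
    _ = (1 + ε) * f * ∑ s ∈ 𝓙, c s := by ring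

/-- Batch deletion with general weights: if `w` is a fractional packing, `𝓘 ⊆ 𝓢` is a
set cover of `𝓔` consisting of tight sets, and for every `x ≥ 0` we have
`|D_{>x}| ≤ ε·|𝓔'_{>x}|` where `𝓔' = 𝓔 \ D`, then `w(D) ≤ ε·w(𝓔')`, and consequently
`c(𝓘) ≤ (1+ε)·f·c(𝓙)` for every set cover `𝓙 ⊆ 𝓢` of `𝓔'`. -/
theorem batch_deletion_general_weights {α : Type*} [DecidableEq α]
    (𝓢 : Finset (Finset α)) (𝓔 : Finset α) (c : Finset α → ℝ)
    (hsub : ∀ s ∈ 𝓢, s ⊆ 𝓔)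
    (hc : ∀ s ∈ 𝓢, 0 < c s)
    (f : ℕ)
    (hf : ∀ e ∈ 𝓔, (𝓢.filter (fun s => e ∈ s)).card ≤ f)
    (ε : ℝ) (hε : 0 < ε)
    (w : α → ℝ) (hw : ∀ e ∈ 𝓔, 0 ≤ w e)
    (hpack : ∀ s ∈ 𝓢, ∑ e ∈ s, w e ≤ c s)
    (𝓘 : Finset (Finset α)) (h𝓘 : 𝓘 ⊆ 𝓢)
    (hcover𝓘 : ∀ e ∈ 𝓔, ∃ s ∈ 𝓘, e ∈ s)
    (htight : ∀ s ∈ 𝓘, c s ≤ ∑ e ∈ s, w e)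
    (D : Finset α) (hD : D ⊆ 𝓔)
    (hlevel : ∀ x : ℝ, 0 ≤ x →
      ((D.filter (fun e => x < w e)).card : ℝ) ≤
        ε * (((𝓔 \ D).filter (fun e => x < w e)).card : ℝ)) :
    (∑ e ∈ D, w e ≤ ε * ∑ e ∈ 𝓔 \ D, w e) ∧
      (∀ 𝓙 : Finset (Finset α), 𝓙 ⊆ 𝓢 → (∀ e ∈ 𝓔 \ D, ∃ s ∈ 𝓙, e ∈ s) →
        ∑ s ∈ 𝓘, c s ≤ (1 + ε) * f * ∑ s ∈ 𝓙, c s) :=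
  batch_deletion_general_weights_general 𝓢 𝓔 c hsub f hf ε hε w hw hpack 𝓘 h𝓘 htight D hD hlevel
end

section
/- Let 𝓢 be a finite collection of sets over a finite universe of elements with positive set costs c_s, in which every element belongs to at most f sets of 𝓢, and let 0 < ε < 1/2. Let the current elements be 𝓔 = A ⊎ P and the dead elements D (disjoint from 𝓔), and set 𝓔* = 𝓔 ∪ D. Let L be a natural number and ℓ a level function assigning each element of 𝓔* a level in {0,…,L}. Let w be a weight function on 𝓔* with W*(s) = ∑_{e∈s∩𝓔*} w(e) and W(s) = ∑_{e∈s∩𝓔} w(e), and suppose: (Invariant 1) w(e) = (1+ε)^{-ℓ(e)} for every e ∈ A, and 0 ≤ w(e) ≤ (1+ε)^{-ℓ(e)} for every e ∈ P ∪ D; (Invariant 2) 0 ≤ W*(s) ≤ c_s for every s ∈ 𝓢; (Invariant 3) every element e ∈ 𝓔 ∪ D is contained in at least one set s with (1+ε)^{-1} c_s ≤ W*(s) ≤ c_s; and moreover |{e ∈ D : ℓ(e) ≤ j}| ≤ 2ε·|{e ∈ A : ℓ(e) ≤ j}| for every j ∈ {0,…,L}. Then the collection 𝓢*_tight = {s ∈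 𝓢 : (1+ε)^{-1} c_s ≤ W*(s) ≤ c_s} is a set cover of 𝓔, and c(𝓢*_tight) ≤ (1+5ε) f · c(𝓙) for every set cover 𝓙 ⊆ 𝓢 of 𝓔; that is, 𝓢*_tight is a (1+5ε)f-approximate minimum set cover of (𝓢, 𝓔). -/
/-!
Every tight set costs at most `(1 + ε)` times its weight, so by the frequency bound the tight
sets cost at most `(1 + ε) f W(𝓔*)`. Weak duality for the packing `w` bounds `W(𝓔)` by the cost
of any cover `𝓙`. Writing `(1 + ε)^(-ℓ)` as a layer-cake sum over levels turns the level-wise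
count bound on dead elements into `W(D) ≤ 2ε W(A)`, so `W(𝓔*) ≤ (1 + 2ε) c(𝓙)`, and
`(1 + ε)(1 + 2ε) ≤ 1 + 5ε` as `ε ≤ 1`.
-/

open Finset

section DoubleCounting

variable {α M : Type*} [DecidableEq α]

theorem sum_sum_inter_eq_sum_card_filter_mem_nsmul [AddCommMonoid M] (s : Finset α)
    (B : Finset (Finset α)) (w : α → M) :
    ∑ t ∈ B, ∑ a ∈ s ∩ t, w a = ∑ a ∈ s, #{b ∈ B | a ∈ b} • w a := by
  simp_rw [← filter_mem_eq_inter, sum_filter]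
  rw [sum_comm]
  simp_rw [← sum_filter, sum_const]

variable {s : Finset α} {B : Finset (Finset α)} {w : α → ℝ}

theorem sum_sum_le_mul_sum {n : ℕ} (hB : ∀ t ∈ B, t ⊆ s) (hw : ∀ a ∈ s, 0 ≤ w a)
    (h : ∀ a ∈ s, #{b ∈ B | a ∈ b} ≤ n) :
    ∑ t ∈ B, ∑ a ∈ t, w a ≤ n * ∑ a ∈ s, w a := by
  have hinter : ∑ t ∈ B, ∑ a ∈ t, w a = ∑ t ∈ B, ∑ a ∈ s ∩ t, w a :=
    sum_congr rfl fun t ht => by rw [inter_eq_right.2 (hB t ht)]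
  rw [hinter, sum_sum_inter_eq_sum_card_filter_mem_nsmul, mul_sum]
  refine sum_le_sum fun a ha => ?_
  rw [nsmul_eq_mul]
  exact mul_le_mul_of_nonneg_right (by exact_mod_cast h a ha) (hw a ha)

theorem sum_le_sum_sum_inter (hw : ∀ a ∈ s, 0 ≤ w a) (h : ∀ a ∈ s, ∃ b ∈ B, a ∈ b) :
    ∑ a ∈ s, w a ≤ ∑ t ∈ B, ∑ a ∈ s ∩ t, w a := by
  rw [sum_sum_inter_eq_sum_card_filter_mem_nsmul]
  refine sum_le_sum fun a ha => ?_
  obtain ⟨b, hb, hab⟩ := h a ha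
  have : 1 ≤ #{b ∈ B | a ∈ b} := card_pos.2 ⟨b, mem_filter.2 ⟨hb, hab⟩⟩
  rw [nsmul_eq_mul]
  exact le_mul_of_one_le_left (hw a ha) (by exact_mod_cast this)

theorem sum_le_sum_of_cover_of_packing {c : Finset α → ℝ} (hw : ∀ t ∈ B, ∀ a ∈ t, 0 ≤ w a)
    (hpack : ∀ t ∈ B, ∑ a ∈ t, w a ≤ c t) (hcover : ∀ a ∈ s, ∃ b ∈ B, a ∈ b) :
    ∑ a ∈ s, w a ≤ ∑ t ∈ B, c t := by
  have hws : ∀ a ∈ s, 0 ≤ w a := fun a ha =>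
    let ⟨b, hb, hab⟩ := hcover a ha; hw b hb a hab
  refine (sum_le_sum_sum_inter hws hcover).trans (sum_le_sum fun t ht => ?_)
  exact (sum_le_sum_of_subset_of_nonneg inter_subset_right fun a ha _ => hw t ht a ha).trans
    (hpack t ht)

end DoubleCounting

section LayerCake

variable {α : Type*} {ℓ : α → ℕ} {L : ℕ}

theorem sum_comp_eq_card_nsmul_add_sum_range {M : Type*} [AddCommGroup M] {S : Finset α}
    (hS : ∀ e ∈ S, ℓ e ≤ L) (g : ℕ → M) :
    ∑ e ∈ S, g (ℓ e) =
      #S • g L + ∑ j ∈ range L, #{e ∈ S | ℓ e ≤ j} • (g j - g (j + 1)) := by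
  have telescope : ∀ e ∈ S,
      g (ℓ e) = g L + ∑ j ∈ range L, if ℓ e ≤ j then g j - g (j + 1) else 0 := by
    intro e he
    have hIco : {j ∈ range L | ℓ e ≤ j} = Ico (ℓ e) L := by
      ext j; simp [and_comm]
    have := sum_Ico_sub (fun j => -g j) (hS e he)
    simp only [neg_sub_neg] at this
    rw [← sum_filter, hIco, this, add_sub_cancel]
  rw [sum_congr rfl telescope, sum_add_distrib, sum_const, sum_comm]
  simp_rw [← sum_filter, sum_const]

theorem sum_comp_le_mul_sum_comp_of_card_filter_le {S T : Finset α} {g : ℕ → ℝ} {κ : ℝ}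
    (hS : ∀ e ∈ S, ℓ e ≤ L) (hT : ∀ e ∈ T, ℓ e ≤ L) (hg : Antitone g) (hgL : 0 ≤ g L)
    (h : ∀ j ≤ L, (#{e ∈ S | ℓ e ≤ j} : ℝ) ≤ κ * #{e ∈ T | ℓ e ≤ j}) :
    ∑ e ∈ S, g (ℓ e) ≤ κ * ∑ e ∈ T, g (ℓ e) := by
  rw [sum_comp_eq_card_nsmul_add_sum_range hS, sum_comp_eq_card_nsmul_add_sum_range hT,
    mul_add, mul_sum]
  simp only [nsmul_eq_mul, ← mul_assoc]
  gcongr with j hj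
  · simpa only [filter_true_of_mem hS, filter_true_of_mem hT] using h L le_rfl
  · exact sub_nonneg.2 (hg j.le_succ)
  · exact h j (mem_range.1 hj).le

theorem sum_le_mul_sum_of_le_zpow_neg_of_card_filter_le {S T : Finset α} {w : α → ℝ}
    {ε κ : ℝ} (hε : 0 ≤ ε) (hS : ∀ e ∈ S, ℓ e ≤ L) (hT : ∀ e ∈ T, ℓ e ≤ L)
    (hwS : ∀ e ∈ S, w e ≤ (1 + ε) ^ (-(ℓ e : ℤ))) (hwT : ∀ e ∈ T, w e = (1 + ε) ^ (-(ℓ e : ℤ)))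
    (h : ∀ j ≤ L, (#{e ∈ S | ℓ e ≤ j} : ℝ) ≤ κ * #{e ∈ T | ℓ e ≤ j}) :
    ∑ e ∈ S, w e ≤ κ * ∑ e ∈ T, w e := by
  have hg : Antitone fun j : ℕ => (1 + ε) ^ (-(j : ℤ)) := fun i j hij =>
    zpow_le_zpow_right₀ (by linarith) (by simpa using hij)
  calc ∑ e ∈ S, w e ≤ ∑ e ∈ S, (1 + ε) ^ (-(ℓ e : ℤ)) := sum_le_sum hwS
    _ ≤ κ * ∑ e ∈ T, (1 + ε) ^ (-(ℓ e : ℤ)) :=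
        sum_comp_le_mul_sum_comp_of_card_filter_le hS hT hg (zpow_pos (by linarith) _).le h
    _ = κ * ∑ e ∈ T, w e := by rw [sum_congr rfl fun e he => (hwT e he).symm]

end LayerCake

theorem dynamic_tight_sets_approx_min_cover_general {α : Type*} [DecidableEq α]
    (𝓢 : Finset (Finset α)) (A P D : Finset α)
    (c : Finset α → ℝ)
    (hsub : ∀ s ∈ 𝓢, s ⊆ A ∪ P ∪ D)
    (f : ℕ)
    (hf : ∀ e ∈ A ∪ P ∪ D, (𝓢.filter (fun s => e ∈ s)).card ≤ f)
    (ε : ℝ) (hε : 0 < ε) (hε' : ε < 1 / 2)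
    (L : ℕ) (ℓ : α → ℕ) (hℓ : ∀ e ∈ A ∪ P ∪ D, ℓ e ≤ L)
    (w : α → ℝ)
    -- Invariant 1
    (hwA : ∀ e ∈ A, w e = (1 + ε) ^ (-(ℓ e : ℤ)))
    (hwPD : ∀ e ∈ P ∪ D, 0 ≤ w e ∧ w e ≤ (1 + ε) ^ (-(ℓ e : ℤ)))
    -- Invariant 2
    (hpack : ∀ s ∈ 𝓢, 0 ≤ ∑ e ∈ s, w e ∧ ∑ e ∈ s, w e ≤ c s)
    -- Invariant 3
    (helem : ∀ e ∈ A ∪ P ∪ D, ∃ s ∈ 𝓢, e ∈ s ∧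
      (1 + ε)⁻¹ * c s ≤ ∑ e' ∈ s, w e' ∧ ∑ e' ∈ s, w e' ≤ c s)
    -- level-wise bound on dead elements
    (hcount : ∀ j : ℕ, j ≤ L →
      ((D.filter (fun e => ℓ e ≤ j)).card : ℝ) ≤
        2 * ε * ((A.filter (fun e => ℓ e ≤ j)).card : ℝ))
    (𝓣 : Finset (Finset α))
    (h𝓣 : ∀ s, s ∈ 𝓣 ↔ s ∈ 𝓢 ∧
      (1 + ε)⁻¹ * c s ≤ ∑ e' ∈ s, w e' ∧ ∑ e' ∈ s, w e' ≤ c s) :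
    (∀ e ∈ A ∪ P, ∃ s ∈ 𝓣, e ∈ s) ∧
      (∀ 𝓙 : Finset (Finset α), 𝓙 ⊆ 𝓢 → (∀ e ∈ A ∪ P, ∃ s ∈ 𝓙, e ∈ s) →
        ∑ s ∈ 𝓣, c s ≤ (1 + 5 * ε) * f * ∑ s ∈ 𝓙, c s) := by
  have hε1 : 0 < 1 + ε := by linarith
  have hw : ∀ e ∈ A ∪ P ∪ D, 0 ≤ w e := by
    intro e he
    rw [union_assoc, mem_union] at he
    rcases he with he | he
    exacts [hwA e he ▸ (zpow_pos hε1 _).le, (hwPD e he).1]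
  have h𝓣𝓢 : 𝓣 ⊆ 𝓢 := fun s hs => ((h𝓣 s).1 hs).1
  refine ⟨fun e he => ?_, fun 𝓙 h𝓙𝓢 h𝓙 => ?_⟩
  · obtain ⟨s, hs, hes, htight⟩ := helem e (mem_union_left _ he)
    exact ⟨s, (h𝓣 s).2 ⟨hs, htight⟩, hes⟩
  have hactual : ∑ e ∈ A ∪ P, w e ≤ ∑ s ∈ 𝓙, c s :=
    sum_le_sum_of_cover_of_packing (fun s hs e he => hw e (hsub s (h𝓙𝓢 hs) he))
      (fun s hs => (hpack s (h𝓙𝓢 hs)).2) h𝓙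
  have hdead : ∑ e ∈ D, w e ≤ 2 * ε * ∑ e ∈ A, w e :=
    sum_le_mul_sum_of_le_zpow_neg_of_card_filter_le hε.le
      (fun e he => hℓ e (mem_union_right _ he))
      (fun e he => hℓ e (mem_union_left _ (mem_union_left _ he)))
      (fun e he => (hwPD e (mem_union_right _ he)).2) hwA hcount
  have hshadow : ∑ e ∈ A ∪ P ∪ D, w e ≤ (1 + 2 * ε) * ∑ s ∈ 𝓙, c s := by
    have hinter : 0 ≤ ∑ e ∈ (A ∪ P) ∩ D, w e :=
      sum_nonneg fun e he => hw e (mem_union_right _ (mem_inter.1 he).2)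
    have hA : ∑ e ∈ A, w e ≤ ∑ e ∈ A ∪ P, w e :=
      sum_le_sum_of_subset_of_nonneg subset_union_left fun e he _ => hw e (mem_union_left _ he)
    nlinarith [sum_union_inter (s₁ := A ∪ P) (s₂ := D) (f := w)]
  have hfC : 0 ≤ (f : ℝ) * ∑ s ∈ 𝓙, c s :=
    mul_nonneg f.cast_nonneg ((sum_nonneg fun e he => hw e (mem_union_left _ he)).trans hactual)
  calc ∑ s ∈ 𝓣, c s ≤ (1 + ε) * ∑ s ∈ 𝓣, ∑ e ∈ s, w e := by
        rw [mul_sum]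
        exact sum_le_sum fun s hs => (inv_mul_le_iff₀ hε1).1 ((h𝓣 s).1 hs).2.1
    _ ≤ (1 + ε) * (f * ∑ e ∈ A ∪ P ∪ D, w e) := by
        gcongr
        exact sum_sum_le_mul_sum (fun s hs => hsub s (h𝓣𝓢 hs)) hw fun e he =>
          (card_le_card (filter_subset_filter _ h𝓣𝓢)).trans (hf e he)
    _ ≤ (1 + ε) * (f * ((1 + 2 * ε) * ∑ s ∈ 𝓙, c s)) := by gcongr
    _ ≤ (1 + 5 * ε) * f * ∑ s ∈ 𝓙, c s := by
        nlinarith [mul_nonneg (mul_nonneg hε.le (by linarith : 0 ≤ 1 - ε)) hfC]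

/-- Main approximation guarantee of the dynamic algorithm: under Invariants 1–3 of the
hierarchical partition on the shadow input `𝓔* = 𝓔 ∪ D` (with `𝓔 = A ⊎ P`), together
with the level-wise bound `|D_{≤j}| ≤ 2ε·|A_{≤j}|` for all `j ≤ L`, the collection of
tight sets `𝓢*_tight = {s ∈ 𝓢 : (1+ε)⁻¹ c_s ≤ W*(s) ≤ c_s}` is a set cover of `𝓔` and
is a `(1+5ε)f`-approximate minimum set cover of `(𝓢, 𝓔)`. -/
theorem dynamic_tight_sets_approx_min_cover {α : Type*} [DecidableEq α]
    (𝓢 : Finset (Finset α)) (A P D : Finset α)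
    (hAP : Disjoint A P) (hAD : Disjoint A D) (hPD : Disjoint P D)
    (c : Finset α → ℝ)
    (hsub : ∀ s ∈ 𝓢, s ⊆ A ∪ P ∪ D)
    (hc : ∀ s ∈ 𝓢, 0 < c s)
    (f : ℕ)
    (hf : ∀ e ∈ A ∪ P ∪ D, (𝓢.filter (fun s => e ∈ s)).card ≤ f)
    (ε : ℝ) (hε : 0 < ε) (hε' : ε < 1 / 2)
    (L : ℕ) (ℓ : α → ℕ) (hℓ : ∀ e ∈ A ∪ P ∪ D, ℓ e ≤ L)
    (w : α → ℝ)
    -- Invariant 1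
    (hwA : ∀ e ∈ A, w e = (1 + ε) ^ (-(ℓ e : ℤ)))
    (hwPD : ∀ e ∈ P ∪ D, 0 ≤ w e ∧ w e ≤ (1 + ε) ^ (-(ℓ e : ℤ)))
    -- Invariant 2
    (hpack : ∀ s ∈ 𝓢, 0 ≤ ∑ e ∈ s, w e ∧ ∑ e ∈ s, w e ≤ c s)
    -- Invariant 3
    (helem : ∀ e ∈ A ∪ P ∪ D, ∃ s ∈ 𝓢, e ∈ s ∧
      (1 + ε)⁻¹ * c s ≤ ∑ e' ∈ s, w e' ∧ ∑ e' ∈ s, w e' ≤ c s)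
    -- level-wise bound on dead elements
    (hcount : ∀ j : ℕ, j ≤ L →
      ((D.filter (fun e => ℓ e ≤ j)).card : ℝ) ≤
        2 * ε * ((A.filter (fun e => ℓ e ≤ j)).card : ℝ))
    (𝓣 : Finset (Finset α))
    (h𝓣 : ∀ s, s ∈ 𝓣 ↔ s ∈ 𝓢 ∧
      (1 + ε)⁻¹ * c s ≤ ∑ e' ∈ s, w e' ∧ ∑ e' ∈ s, w e' ≤ c s) :
    (∀ e ∈ A ∪ P, ∃ s ∈ 𝓣, e ∈ s) ∧
      (∀ 𝓙 : Finset (Finset α), 𝓙 ⊆ 𝓢 → (∀ e ∈ A ∪ P, ∃ s ∈ 𝓙, e ∈ s) →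
        ∑ s ∈ 𝓣, c s ≤ (1 + 5 * ε) * f * ∑ s ∈ 𝓙, c s) :=
  dynamic_tight_sets_approx_min_cover_general 𝓢 A P D c hsub f hf ε hε hε' L ℓ hℓ w hwA hwPD hpack
    helem hcount 𝓣 h𝓣
end
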